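/- arXiv:1807.10549 — 2 statements merged into one kernel-verified Lean document; each statement's English description precedes it below -/
import Mathlib

section
/- For each i ∈ {1,2}, the gradient of the Malthusian parameter is Lipschitz on U_i: there exists a constant C > 0 such that for all x, y ∈ U_i, ‖∇λ(x) − ∇λ(y)‖ ≤ C ‖x − y‖, where for x ∈ U₁, ∇λ(x) = (e^{-λ(x) x_b} / G(x), 0) and for x ∈ U₂, ∇λ(x) = (0, e^{-λ(x) x_d} / G(x)). -/
open MeasureTheory Set Filter

noncomputable section

/-- The viable set `𝒱 = {(x_b, x_d) : min(x_b, x_d) > 1}`. -/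
def viable : Set (ℝ × ℝ) := {x : ℝ × ℝ | 1 < min x.1 x.2}

/-- `U₁ = {x ∈ 𝒱 : x_b < x_d}`. -/
def U1 : Set (ℝ × ℝ) := {x ∈ viable | x.1 < x.2}

/-- `U₂ = {x ∈ 𝒱 : x_d < x_b}`. -/
def U2 : Set (ℝ × ℝ) := {x ∈ viable | x.2 < x.1}

/-- `lam` is a Malthusian parameter function on `𝒱`. -/
def IsMalthusian (lam : ℝ × ℝ → ℝ) : Prop :=
  ∀ x ∈ viable, 0 < lam x ∧ (∫ a in (0:ℝ)..(min x.1 x.2), Real.exp (-(lam x) * a)) = 1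

/-- The mean generation time `G(x) = ∫₀^{min(x_b,x_d)} a e^{-λ(x) a} da`. -/
def genTime (lam : ℝ × ℝ → ℝ) (x : ℝ × ℝ) : ℝ :=
  ∫ a in (0:ℝ)..(min x.1 x.2), a * Real.exp (-(lam x) * a)

/-!
Write `t = λ(x) ∈ (0, 1)` and `m = min x_b x_d`. The Malthusian equation reads `e^{-t m} = 1 - t`,
so `m = -log (1 - t) / t`, `t² G(x) = t + (1 - t) log (1 - t)`, and the nonzero entry of `∇λ(x)` is
`H(t) = t² (1 - t) / (t + (1 - t) log (1 - t))`. It therefore suffices that `H` is Lipschitz on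
`(0, 1)` and that `dm/dt ≥ 1/2`. Both come from the Taylor bound
`|t + t²/2 + log (1 - t)| ≤ t³ / (1 - t)`: in the numerator of `H'` the terms of order `t³`
cancel, leaving `O(t⁴)` against a denominator `≥ t⁴/4`.
-/

open Real

lemma abs_add_log_one_sub_le {t : ℝ} (ht0 : 0 ≤ t) (ht1 : t < 1) :
    |t + t ^ 2 / 2 + log (1 - t)| ≤ t ^ 3 / (1 - t) := by
  have h := abs_log_sub_add_sum_range_le (x := t) (by rwa [abs_of_nonneg ht0]) 2
  rw [abs_of_nonneg ht0] at h
  norm_num [Finset.sum_range_succ] at h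
  exact h

lemma hasDerivAt_log_one_sub {t : ℝ} (ht : t < 1) :
    HasDerivAt (fun s => log (1 - s)) (-(1 - t)⁻¹) t := by
  simpa [neg_div, div_eq_inv_mul] using ((hasDerivAt_id t).const_sub 1).log (by simp; linarith)

def scaledGenTime (t : ℝ) : ℝ := t + (1 - t) * log (1 - t)

def gradOfRate (t : ℝ) : ℝ := t ^ 2 * (1 - t) / scaledGenTime t

lemma hasDerivAt_scaledGenTime {t : ℝ} (ht : t < 1) :
    HasDerivAt scaledGenTime (-log (1 - t)) t := by
  have h := (hasDerivAt_id t).add (((hasDerivAt_id t).const_sub 1).mul (hasDerivAt_log_one_sub ht))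
  refine h.congr_deriv ?_
  simp only [id_eq]
  field_simp [show 1 - t ≠ 0 by linarith]
  ring

lemma sq_div_two_le_scaledGenTime {t : ℝ} (ht0 : 0 ≤ t) (ht1 : t < 1) :
    t ^ 2 / 2 ≤ scaledGenTime t := by
  have hderiv : ∀ s ∈ Ico (0 : ℝ) 1,
      HasDerivAt (fun s => scaledGenTime s - s ^ 2 / 2) (-log (1 - s) - s) s := fun s hs =>
    ((hasDerivAt_scaledGenTime hs.2).sub ((hasDerivAt_pow 2 s).div_const 2)).congr_deriv (by simp)
  have hmono : MonotoneOn (fun s => scaledGenTime s - s ^ 2 / 2) (Ico 0 1) := by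
    refine monotoneOn_of_hasDerivWithinAt_nonneg (convex_Ico 0 1)
      (fun s hs => (hderiv s hs).continuousAt.continuousWithinAt)
      (fun s hs => (hderiv s (interior_subset hs)).hasDerivWithinAt) fun s hs => ?_
    rw [interior_Ico] at hs
    linarith [log_le_sub_one_of_pos (show 0 < 1 - s by linarith [hs.2])]
  simpa [scaledGenTime] using hmono ⟨le_rfl, one_pos⟩ ⟨ht0, ht1⟩ ht0

lemma hasDerivAt_gradOfRate {t : ℝ} (ht0 : 0 < t) (ht1 : t < 1) :
    HasDerivAt gradOfRate
      (((2 * t - 3 * t ^ 2) * scaledGenTime t + t ^ 2 * (1 - t) * log (1 - t))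
        / scaledGenTime t ^ 2) t := by
  have hD : scaledGenTime t ≠ 0 :=
    (lt_of_lt_of_le (by positivity) (sq_div_two_le_scaledGenTime ht0.le ht1)).ne'
  have h := ((hasDerivAt_pow 2 t).mul ((hasDerivAt_id t).const_sub 1)).div
    (hasDerivAt_scaledGenTime ht1) hD
  refine h.congr_deriv ?_
  simp only [id_eq, Pi.mul_apply]
  ring

lemma abs_deriv_gradOfRate_numerator_le {t : ℝ} (ht0 : 0 ≤ t) (ht1 : t < 1) :
    |(2 * t - 3 * t ^ 2) * scaledGenTime t + t ^ 2 * (1 - t) * log (1 - t)| ≤ 3 * t ^ 4 := by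
  set E := t + t ^ 2 / 2 + log (1 - t) with hE
  have hEbound : |(1 - t) * E| ≤ t ^ 3 := by
    rw [abs_mul, abs_of_pos (by linarith : 0 < 1 - t), ← le_div_iff₀' (by linarith)]
    exact abs_add_log_one_sub_le ht0 ht1
  -- the Taylor terms of `log (1 - t)` up to order two cancel exactly
  have hexpand : (2 * t - 3 * t ^ 2) * scaledGenTime t + t ^ 2 * (1 - t) * log (1 - t)
      = -t ^ 5 + 2 * t * (1 - t) * ((1 - t) * E) := by
    rw [scaledGenTime, show log (1 - t) = E - t - t ^ 2 / 2 by rw [hE]; ring]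
    ring
  rw [hexpand]
  have h1 : |2 * t * (1 - t) * ((1 - t) * E)| ≤ 2 * t * t ^ 3 := by
    have hpos : 0 ≤ 2 * t * (1 - t) := by nlinarith
    rw [abs_mul, abs_of_nonneg hpos]
    calc 2 * t * (1 - t) * |(1 - t) * E| ≤ 2 * t * (1 - t) * t ^ 3 := by gcongr
      _ ≤ 2 * t * t ^ 3 := by nlinarith [pow_nonneg ht0 3]
  calc _ ≤ |-t ^ 5| + |2 * t * (1 - t) * ((1 - t) * E)| := abs_add_le _ _
    _ ≤ t ^ 4 + 2 * t * t ^ 3 := by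
        rw [abs_neg, abs_of_nonneg (by positivity)]
        gcongr ?_ + ?_
        nlinarith [pow_nonneg ht0 4]
    _ = 3 * t ^ 4 := by ring

lemma lipschitzOnWith_gradOfRate : LipschitzOnWith 12 gradOfRate (Ioo 0 1) := by
  refine (convex_Ioo 0 1).lipschitzOnWith_of_nnnorm_hasDerivWithin_le
    (fun t ht => (hasDerivAt_gradOfRate ht.1 ht.2).hasDerivWithinAt) fun t ht => ?_
  have hD := sq_div_two_le_scaledGenTime ht.1.le ht.2
  have ht4 : 0 < t ^ 4 := by have := ht.1; positivity
  have hD2 : t ^ 4 / 4 ≤ scaledGenTime t ^ 2 := by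
    nlinarith [pow_le_pow_left₀ (by positivity : 0 ≤ t ^ 2 / 2) hD 2]
  rw [← NNReal.coe_le_coe, coe_nnnorm, Real.norm_eq_abs, abs_div,
    abs_of_nonneg (sq_nonneg (scaledGenTime t)), div_le_iff₀ (by linarith)]
  calc _ ≤ 3 * t ^ 4 := abs_deriv_gradOfRate_numerator_le ht.1.le ht.2
    _ ≤ _ := by push_cast; linarith

def horizonOfRate (t : ℝ) : ℝ := -log (1 - t) / t

lemma hasDerivAt_horizonOfRate {t : ℝ} (ht0 : 0 < t) (ht1 : t < 1) :
    HasDerivAt horizonOfRate ((t / (1 - t) + log (1 - t)) / t ^ 2) t := by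
  have h := (hasDerivAt_log_one_sub ht1).neg.div (hasDerivAt_id t) ht0.ne'
  refine h.congr_deriv ?_
  simp only [id_eq, Pi.neg_apply]
  field_simp [show 1 - t ≠ 0 by linarith]
  ring

lemma abs_sub_le_two_mul_abs_horizonOfRate_sub {s t : ℝ} (hs : s ∈ Ioo (0 : ℝ) 1)
    (ht : t ∈ Ioo (0 : ℝ) 1) : |t - s| ≤ 2 * |horizonOfRate t - horizonOfRate s| := by
  have hderiv : ∀ u ∈ Ioo (0 : ℝ) 1, 1 / 2 ≤ deriv horizonOfRate u := fun u hu => by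
    have hE := abs_add_log_one_sub_le hu.1.le hu.2
    rw [(hasDerivAt_horizonOfRate hu.1 hu.2).deriv, le_div_iff₀ (by have := hu.1; positivity)]
    -- expanded like this, `u / (1 - u)` exceeds the Taylor bound for `-log (1 - u)` by `u ^ 2 / 2`
    have : u / (1 - u) = u + u ^ 2 + u ^ 3 / (1 - u) := by
      field_simp [show 1 - u ≠ 0 by linarith [hu.2]]
      ring
    linarith [neg_abs_le (u + u ^ 2 / 2 + log (1 - u))]
  have hgrowth := (convex_Ioo (0 : ℝ) 1).mul_sub_le_image_sub_of_le_deriv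
    (fun u hu => (hasDerivAt_horizonOfRate hu.1 hu.2).continuousAt.continuousWithinAt)
    (fun u hu => (hasDerivAt_horizonOfRate (interior_subset hu).1
      (interior_subset hu).2).differentiableAt.differentiableWithinAt)
    (fun u hu => hderiv u (interior_subset hu))
  rcases le_total s t with hst | hts
  · have := hgrowth s hs t ht hst
    rw [abs_of_nonneg (sub_nonneg.2 hst), abs_of_nonneg (by linarith)]
    linarith
  · have := hgrowth t ht s hs hts
    rw [abs_of_nonpos (sub_nonpos.2 hts), abs_of_nonpos (by linarith)]
    linarith

lemma integral_exp_neg_mul {t : ℝ} (ht : t ≠ 0) (m : ℝ) :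
    ∫ a in (0 : ℝ)..m, exp (-t * a) = (1 - exp (-t * m)) / t := by
  rw [intervalIntegral.integral_comp_mul_left (fun a => exp a) (neg_ne_zero.2 ht), integral_exp]
  simp only [mul_zero, exp_zero, smul_eq_mul, neg_mul]
  field_simp
  ring

lemma integral_mul_exp_neg_mul {t : ℝ} (ht : t ≠ 0) (m : ℝ) :
    ∫ a in (0 : ℝ)..m, a * exp (-t * a) = (1 - exp (-t * m) - t * m * exp (-t * m)) / t ^ 2 := by
  have hderiv : ∀ a ∈ uIcc (0 : ℝ) m, HasDerivAt
      (fun a => -(a * exp (-t * a) / t) - exp (-t * a) / t ^ 2) (a * exp (-t * a)) a := by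
    intro a _
    have hexp := ((hasDerivAt_id a).const_mul (-t)).exp
    have h := (((hasDerivAt_id a).mul hexp).div_const t).neg.sub (hexp.div_const (t ^ 2))
    refine h.congr_deriv ?_
    simp only [id_eq]
    field_simp
    ring
  have hint : IntervalIntegrable (fun a => a * exp (-t * a)) volume 0 m :=
    Continuous.intervalIntegrable (by fun_prop) 0 m
  rw [intervalIntegral.integral_eq_sub_of_hasDerivAt hderiv hint]
  field_simp
  simp only [mul_zero, neg_zero, exp_zero, zero_sub, mul_neg, mul_one, sub_neg_eq_add]
  ring

namespace IsMalthusian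

variable {lam : ℝ × ℝ → ℝ} {x : ℝ × ℝ}

lemma exp_neg_mul_min_eq (hlam : IsMalthusian lam) (hx : x ∈ viable) :
    exp (-lam x * min x.1 x.2) = 1 - lam x := by
  obtain ⟨hpos, hint⟩ := hlam x hx
  rw [integral_exp_neg_mul hpos.ne', div_eq_one_iff_eq hpos.ne'] at hint
  linarith

lemma mem_Ioo (hlam : IsMalthusian lam) (hx : x ∈ viable) : lam x ∈ Ioo (0 : ℝ) 1 :=
  ⟨(hlam x hx).1, by linarith [hlam.exp_neg_mul_min_eq hx, exp_pos (-lam x * min x.1 x.2)]⟩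

lemma min_eq_horizonOfRate (hlam : IsMalthusian lam) (hx : x ∈ viable) :
    min x.1 x.2 = horizonOfRate (lam x) := by
  rw [horizonOfRate, ← hlam.exp_neg_mul_min_eq hx, log_exp]
  field_simp [(hlam.mem_Ioo hx).1.ne']

lemma exp_neg_mul_min_div_genTime (hlam : IsMalthusian lam) (hx : x ∈ viable) :
    exp (-lam x * min x.1 x.2) / genTime lam x = gradOfRate (lam x) := by
  obtain ⟨ht0, ht1⟩ := hlam.mem_Ioo hx
  have hexp := hlam.exp_neg_mul_min_eq hx
  have hlog : lam x * min x.1 x.2 = -log (1 - lam x) := by rw [← hexp, log_exp]; ring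
  have hD : 0 < scaledGenTime (lam x) :=
    lt_of_lt_of_le (by positivity) (sq_div_two_le_scaledGenTime ht0.le ht1)
  have hG : genTime lam x = scaledGenTime (lam x) / lam x ^ 2 := by
    rw [genTime, integral_mul_exp_neg_mul ht0.ne', hexp, hlog, scaledGenTime]
    ring
  rw [hG, hexp, gradOfRate]
  field_simp

lemma abs_exp_neg_mul_min_div_genTime_sub_le (hlam : IsMalthusian lam) {y : ℝ × ℝ}
    (hx : x ∈ viable) (hy : y ∈ viable) :
    |exp (-lam x * min x.1 x.2) / genTime lam x - exp (-lam y * min y.1 y.2) / genTime lam y|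
      ≤ 24 * ‖x - y‖ := by
  have hgrad := lipschitzOnWith_gradOfRate.dist_le_mul _ (hlam.mem_Ioo hx) _ (hlam.mem_Ioo hy)
  have hrate := abs_sub_le_two_mul_abs_horizonOfRate_sub (hlam.mem_Ioo hy) (hlam.mem_Ioo hx)
  have hmin : |min x.1 x.2 - min y.1 y.2| ≤ ‖x - y‖ := by
    simpa [Prod.norm_def, Real.norm_eq_abs] using abs_min_sub_min_le_max x.1 x.2 y.1 y.2
  rw [hlam.exp_neg_mul_min_div_genTime hx, hlam.exp_neg_mul_min_div_genTime hy]
  rw [hlam.min_eq_horizonOfRate hx, hlam.min_eq_horizonOfRate hy] at hmin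
  rw [Real.dist_eq, Real.dist_eq] at hgrad
  push_cast at hgrad
  linarith

end IsMalthusian

/-- On each region `U_i` the gradient of the Malthusian parameter is Lipschitz:
on `U₁` the gradient is `(e^{-λ(x) x_b}/G(x), 0)` and on `U₂` it is
`(0, e^{-λ(x) x_d}/G(x))`. -/
theorem malthus_gradient_lipschitz (lam : ℝ × ℝ → ℝ) (hlam : IsMalthusian lam) :
    (∃ C > (0:ℝ), ∀ x ∈ U1, ∀ y ∈ U1,
      ‖((Real.exp (-(lam x) * x.1) / genTime lam x, (0:ℝ)) : ℝ × ℝ)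
        - (Real.exp (-(lam y) * y.1) / genTime lam y, (0:ℝ))‖ ≤ C * ‖x - y‖) ∧
    (∃ C > (0:ℝ), ∀ x ∈ U2, ∀ y ∈ U2,
      ‖(((0:ℝ), Real.exp (-(lam x) * x.2) / genTime lam x) : ℝ × ℝ)
        - ((0:ℝ), Real.exp (-(lam y) * y.2) / genTime lam y)‖ ≤ C * ‖x - y‖) := by
  refine ⟨⟨24, by norm_num, fun x hx y hy => ?_⟩, ⟨24, by norm_num, fun x hx y hy => ?_⟩⟩
  · have h := hlam.abs_exp_neg_mul_min_div_genTime_sub_le hx.1 hy.1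
    rw [min_eq_left hx.2.le, min_eq_left hy.2.le] at h
    simpa [Prod.norm_def] using h
  · have h := hlam.abs_exp_neg_mul_min_div_genTime_sub_le hx.1 hy.1
    rw [min_eq_right hx.2.le, min_eq_right hy.2.le] at h
    simpa [Prod.norm_def] using h
end
end

section
/- Fix σ > 0, let x ∈ 𝒱 with x_b = x_d = m > 1 and let u ∈ [0,1]. Then lim_{ε → 0⁺} ∫₀¹ ((λ(x_b, m − εu + εh) − λ(x_b, m − εu))/ε) h k(h) dh = (e^{−λ(x) m}/G(x)) (∫₀^u h² k(h) dh + u ∫_u^1 h k(h) dh). In particular, for h ∈ [u,1] and ε > 0 small one has λ(x_b, m + ε(h−u)) = λ(x), so only the portion h ≤ u contributes the full quadratic term. -/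
open MeasureTheory Set Filter

noncomputable section

/-- The mutation kernel `k(h) = 1_{[-1,1]}(h) e^{−h²/σ²} / ∫_{-1}^1 e^{−z²/σ²} dz`. -/
def kker (σ : ℝ) (h : ℝ) : ℝ :=
  (if h ∈ Icc (-1:ℝ) 1 then Real.exp (-h ^ 2 / σ ^ 2) else 0) /
    ∫ z in (-1:ℝ)..1, Real.exp (-z ^ 2 / σ ^ 2)

/-! On `𝒱` the Malthusian equation `(1 - e^{-λa})/λ = 1`, `a = min(x_b, x_d)`, says
`a = lifespan λ := -log(1 - λ)/λ`. Since `lifespan` is strictly increasing on `(0, 1)`,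
`λ(x) = Λ(min(x_b, x_d))` with `Λ(y) = λ(y, y)` its inverse, which is continuous and, by the
inverse function theorem, differentiable with `Λ'(m) = 1/lifespan'(λ(x)) = e^{-λ(x)m}/G(x)`.
For small `ε > 0` the integrand is `(Λ(m + ε(min(h,u) - u)) - Λ(m - εu))/ε · h k(h)`, which tends
to `Λ'(m) min(h,u) h k(h)` and is dominated by a multiple of `|h k(h)|`; dominated convergence
gives the limit, and `∫₀¹ min(h,u) h k(h) dh` splits at `u`. For `h ≥ u` the minimum stays `m`. -/

open Topology

theorem HasDerivAt.tendsto_sub_div {φ : ℝ → ℝ} {D m : ℝ} (hφ : HasDerivAt φ D m) (c₁ c₂ : ℝ) :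
    Tendsto (fun ε => (φ (m + ε * c₁) - φ (m + ε * c₂)) / ε) (𝓝[≠] 0) (𝓝 (D * (c₁ - c₂))) := by
  have hcomp : ∀ c : ℝ, HasDerivAt (fun ε => φ (m + ε * c)) (D * c) 0 := fun c => by
    have hφ' : HasDerivAt φ D (m + 0 * c) := by simpa using hφ
    have hlin : HasDerivAt (fun ε : ℝ => m + ε * c) c 0 := by
      simpa using ((hasDerivAt_id (0:ℝ)).mul_const c).const_add m
    exact hφ'.comp 0 hlin
  simpa [div_eq_inv_mul, mul_sub] using ((hcomp c₁).sub (hcomp c₂)).tendsto_slope_zero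

theorem HasDerivAt.tendsto_integral_sub_div_mul {φ : ℝ → ℝ} {D m a b : ℝ}
    (hφ : HasDerivAt φ D m) (hφc : ∀ᶠ y in 𝓝 m, ContinuousAt φ y) {c₁ c₂ g : ℝ → ℝ}
    (hc₁ : ContinuousOn c₁ (uIcc a b)) (hc₂ : ContinuousOn c₂ (uIcc a b))
    (hg : IntervalIntegrable g volume a b) :
    Tendsto (fun ε => ∫ t in a..b, (φ (m + ε * c₁ t) - φ (m + ε * c₂ t)) / ε * g t)
      (𝓝[≠] 0) (𝓝 (∫ t in a..b, D * (c₁ t - c₂ t) * g t)) := by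
  obtain ⟨R, hR⟩ := isCompact_uIcc.exists_bound_of_continuousOn (hc₁.prodMk hc₂)
  have hR₁ : ∀ t ∈ uIcc a b, |c₁ t| ≤ R := fun t ht => (norm_fst_le _).trans (hR t ht)
  have hR₂ : ∀ t ∈ uIcc a b, |c₂ t| ≤ R := fun t ht => (norm_snd_le _).trans (hR t ht)
  obtain ⟨K, hK0, hK⟩ := hφ.isBigO_sub.exists_nonneg
  obtain ⟨δ, hδ, hball⟩ := Metric.eventually_nhds_iff.mp (hK.bound.and hφc)
  have hsmall : ∀ᶠ ε in 𝓝[≠] (0:ℝ), ε ≠ 0 ∧ |ε| * R < δ := by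
    refine (eventually_mem_nhdsWithin (a := (0:ℝ)) (s := {0}ᶜ)).and (nhdsWithin_le_nhds ?_)
    have : Tendsto (fun ε : ℝ => |ε| * R) (𝓝 0) (𝓝 0) := by
      simpa using (continuous_abs.mul continuous_const).tendsto (0:ℝ) (f := fun ε : ℝ => |ε| * R)
    exact this.eventually_lt_const hδ
  have hnear : ∀ {ε c : ℝ}, |ε| * R < δ → |c| ≤ R → dist (m + ε * c) m < δ := fun hε hc => by
    rw [Real.dist_eq, add_sub_cancel_left, abs_mul]
    exact (mul_le_mul_of_nonneg_left hc (abs_nonneg _)).trans_lt hε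
  refine intervalIntegral.tendsto_integral_filter_of_dominated_convergence
    (fun t => 2 * K * R * |g t|) ?_ ?_ (hg.abs.const_mul _) ?_
  · filter_upwards [hsmall] with ε ⟨_, hε⟩
    have hcont : ∀ c : ℝ → ℝ, ContinuousOn c (uIcc a b) → (∀ t ∈ uIcc a b, |c t| ≤ R) →
        ContinuousOn (fun t => φ (m + ε * c t)) (uIcc a b) := fun c hc hcR t ht =>
      (hball (hnear hε (hcR t ht))).2.comp_continuousWithinAt (g := φ)
        (f := fun t => m + ε * c t) ((hc t ht).const_mul ε |>.const_add m)
    exact (hg.continuousOn_mul (((hcont c₁ hc₁ hR₁).sub (hcont c₂ hc₂ hR₂)).div_const ε)).def'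
      |>.aestronglyMeasurable
  · filter_upwards [hsmall] with ε ⟨hε0, hε⟩
    refine Eventually.of_forall fun t ht => ?_
    have hincr : ∀ {c : ℝ}, |c| ≤ R → |φ (m + ε * c) - φ m| ≤ K * (|ε| * R) := fun hc => by
      have h := (hball (hnear hε hc)).1
      rw [Real.norm_eq_abs, Real.norm_eq_abs, add_sub_cancel_left, abs_mul] at h
      exact h.trans (mul_le_mul_of_nonneg_left (mul_le_mul_of_nonneg_left hc (abs_nonneg ε)) hK0)
    have hdiff : |φ (m + ε * c₁ t) - φ (m + ε * c₂ t)| ≤ 2 * K * R * |ε| := by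
      have := abs_sub_le (φ (m + ε * c₁ t)) (φ m) (φ (m + ε * c₂ t))
      rw [abs_sub_comm (φ m)] at this
      linarith [hincr (hR₁ t (uIoc_subset_uIcc ht)), hincr (hR₂ t (uIoc_subset_uIcc ht))]
    rw [Real.norm_eq_abs, abs_mul, abs_div]
    exact mul_le_mul_of_nonneg_right ((div_le_iff₀ (abs_pos.mpr hε0)).mpr hdiff) (abs_nonneg _)
  · exact Eventually.of_forall fun t _ => (hφ.tendsto_sub_div _ _).mul_const _

theorem integral_min_mul {a b u : ℝ} (hau : a ≤ u) (hub : u ≤ b) {g : ℝ → ℝ}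
    (hg : IntervalIntegrable g volume a b) :
    ∫ t in a..b, min t u * g t = (∫ t in a..u, t * g t) + u * ∫ t in u..b, g t := by
  have hmin : IntervalIntegrable (fun t => min t u * g t) volume a b :=
    hg.continuousOn_mul (by fun_prop)
  have hu : u ∈ uIcc a b := mem_uIcc_of_le hau hub
  rw [← intervalIntegral.integral_add_adjacent_intervals
    (hmin.mono_set (uIcc_subset_uIcc left_mem_uIcc hu))
    (hmin.mono_set (uIcc_subset_uIcc hu right_mem_uIcc)), ← intervalIntegral.integral_const_mul]
  congr 1
  · refine intervalIntegral.integral_congr fun t ht => ?_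
    rw [uIcc_of_le hau] at ht
    simp only [min_eq_left ht.2]
  · refine intervalIntegral.integral_congr fun t ht => ?_
    rw [uIcc_of_le hub] at ht
    simp only [min_eq_right ht.1]

theorem integral_exp_neg_mul_s19 {l : ℝ} (hl : l ≠ 0) (M : ℝ) :
    ∫ a in (0:ℝ)..M, Real.exp (-l * a) = (1 - Real.exp (-l * M)) / l := by
  have hderiv : ∀ a ∈ uIcc (0:ℝ) M,
      HasDerivAt (fun a => -Real.exp (-l * a) / l) (Real.exp (-l * a)) a := fun a _ =>
    ((((hasDerivAt_id a).const_mul (-l)).exp.neg).div_const l).congr_deriv (by field_simp; simp)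
  rw [intervalIntegral.integral_eq_sub_of_hasDerivAt hderiv
    ((by fun_prop : Continuous _).intervalIntegrable _ _)]
  simp only [mul_zero, Real.exp_zero]
  ring

theorem integral_mul_exp_neg_mul_s19 {l : ℝ} (hl : l ≠ 0) (M : ℝ) :
    ∫ a in (0:ℝ)..M, a * Real.exp (-l * a) = (1 - Real.exp (-l * M) * (1 + l * M)) / l ^ 2 := by
  have hderiv : ∀ a ∈ uIcc (0:ℝ) M, HasDerivAt
      (fun a => -((l * a + 1) / l ^ 2) * Real.exp (-l * a)) (a * Real.exp (-l * a)) a :=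
    fun a _ => (((((hasDerivAt_id a).const_mul l).add_const 1).div_const (l ^ 2)).neg.mul
      ((hasDerivAt_id a).const_mul (-l)).exp).congr_deriv
        (by simp only [id, Pi.neg_apply]; field_simp; ring)
  rw [intervalIntegral.integral_eq_sub_of_hasDerivAt hderiv
    ((by fun_prop : Continuous _).intervalIntegrable _ _)]
  simp only [mul_zero, Real.exp_zero]
  field_simp
  ring

def lifespan (l : ℝ) : ℝ := -Real.log (1 - l) / l

theorem hasDerivAt_lifespan {l : ℝ} (hl0 : l ≠ 0) (hl1 : l ≠ 1) :
    HasDerivAt lifespan ((l / (1 - l) + Real.log (1 - l)) / l ^ 2) l := by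
  have hsub : 1 - l ≠ 0 := sub_ne_zero.mpr (Ne.symm hl1)
  have hlog := ((hasDerivAt_id l).const_sub 1).log hsub
  refine (hlog.neg.div (hasDerivAt_id l) hl0).congr_deriv ?_
  simp only [id, Pi.neg_apply]
  field_simp
  ring

theorem div_one_sub_add_log_one_sub_pos {l : ℝ} (hl0 : l ≠ 0) (hl1 : l < 1) :
    0 < l / (1 - l) + Real.log (1 - l) := by
  have hsub : 0 < 1 - l := sub_pos.mpr hl1
  have hlog : Real.log (1 - l)⁻¹ < (1 - l)⁻¹ - 1 :=
    Real.log_lt_sub_one_of_pos (inv_pos.mpr hsub) (by simpa [sub_eq_self] using hl0)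
  have hinv : (1 - l)⁻¹ - 1 = l / (1 - l) := by field_simp; ring
  rw [Real.log_inv, hinv] at hlog
  linarith

theorem strictMonoOn_lifespan : StrictMonoOn lifespan (Ioo 0 1) := by
  refine strictMonoOn_of_deriv_pos (convex_Ioo 0 1) (fun l hl => ?_) (fun l hl => ?_)
  · exact (hasDerivAt_lifespan hl.1.ne' hl.2.ne).continuousAt.continuousWithinAt
  · rw [interior_Ioo] at hl
    rw [(hasDerivAt_lifespan hl.1.ne' hl.2.ne).deriv]
    exact div_pos (div_one_sub_add_log_one_sub_pos hl.1.ne' hl.2) (pow_pos hl.1 2)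

theorem mk_self_mem_viable {y : ℝ} (hy : 1 < y) : (y, y) ∈ viable := by
  simpa [viable] using hy

namespace IsMalthusian

variable {lam : ℝ × ℝ → ℝ} (hlam : IsMalthusian lam)
include hlam

theorem exp_neg_mul_min {p : ℝ × ℝ} (hp : p ∈ viable) :
    Real.exp (-lam p * min p.1 p.2) = 1 - lam p := by
  obtain ⟨hpos, hint⟩ := hlam p hp
  rw [integral_exp_neg_mul_s19 hpos.ne'] at hint
  field_simp at hint
  rw [neg_mul]
  linarith

theorem mem_Ioo_s19 {p : ℝ × ℝ} (hp : p ∈ viable) : lam p ∈ Ioo 0 1 := by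
  refine ⟨(hlam p hp).1, ?_⟩
  have := Real.exp_pos (-lam p * min p.1 p.2)
  rw [hlam.exp_neg_mul_min hp] at this
  linarith

theorem lifespan_eq {p : ℝ × ℝ} (hp : p ∈ viable) : lifespan (lam p) = min p.1 p.2 := by
  rw [lifespan, ← hlam.exp_neg_mul_min hp, Real.log_exp]
  field_simp [(hlam p hp).1.ne']

theorem eq_diag {p : ℝ × ℝ} (hp : p ∈ viable) :
    lam p = lam (min p.1 p.2, min p.1 p.2) := by
  have hdiag := mk_self_mem_viable (show 1 < min p.1 p.2 from hp)
  refine strictMonoOn_lifespan.injOn (hlam.mem_Ioo_s19 hp) (hlam.mem_Ioo_s19 hdiag) ?_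
  rw [hlam.lifespan_eq hp, hlam.lifespan_eq hdiag, min_self]

theorem lifespan_diag {y : ℝ} (hy : 1 < y) : lifespan (lam (y, y)) = y := by
  rw [hlam.lifespan_eq (mk_self_mem_viable hy), min_self]

theorem strictMonoOn_diag : StrictMonoOn (fun y => lam (y, y)) (Ioi 1) := fun y hy y' hy' hlt => by
  rwa [← strictMonoOn_lifespan.lt_iff_lt (hlam.mem_Ioo_s19 (mk_self_mem_viable hy))
    (hlam.mem_Ioo_s19 (mk_self_mem_viable hy')), hlam.lifespan_diag hy, hlam.lifespan_diag hy']

theorem continuousAt_diag {y : ℝ} (hy : 1 < y) : ContinuousAt (fun y => lam (y, y)) y := by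
  refine hlam.strictMonoOn_diag.continuousAt_of_image_mem_nhds (Ioi_mem_nhds hy) ?_
  have hl := hlam.mem_Ioo_s19 (mk_self_mem_viable hy)
  have hcont := (hasDerivAt_lifespan hl.1.ne' hl.2.ne).continuousAt
  rw [ContinuousAt, hlam.lifespan_diag hy] at hcont
  filter_upwards [Ioo_mem_nhds hl.1 hl.2, hcont.eventually (Ioi_mem_nhds hy)] with l hl' hlife
  refine ⟨lifespan l, hlife, strictMonoOn_lifespan.injOn
    (hlam.mem_Ioo_s19 (mk_self_mem_viable hlife)) hl' (hlam.lifespan_diag hlife)⟩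

theorem genTime_eq {p : ℝ × ℝ} (hp : p ∈ viable) :
    genTime lam p = (1 - min p.1 p.2 + lam p * min p.1 p.2) / lam p := by
  have hpos := (hlam p hp).1
  rw [genTime, integral_mul_exp_neg_mul_s19 hpos.ne', hlam.exp_neg_mul_min hp]
  field_simp
  ring

theorem hasDerivAt_diag {m : ℝ} (hm : 1 < m) : HasDerivAt (fun y => lam (y, y))
    (Real.exp (-lam (m, m) * m) / genTime lam (m, m)) m := by
  have hv := mk_self_mem_viable hm
  obtain ⟨hl0, hl1⟩ := hlam.mem_Ioo_s19 hv
  have hderiv_pos := div_one_sub_add_log_one_sub_pos hl0.ne' hl1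
  refine (HasDerivAt.of_local_left_inverse (hlam.continuousAt_diag hm)
    (hasDerivAt_lifespan hl0.ne' hl1.ne) (div_pos hderiv_pos (pow_pos hl0 2)).ne'
    (by filter_upwards [Ioi_mem_nhds hm] with y hy using hlam.lifespan_diag hy)).congr_deriv ?_
  have hexp : Real.exp (-lam (m, m) * m) = 1 - lam (m, m) := by
    simpa using hlam.exp_neg_mul_min hv
  have hlog : Real.log (1 - lam (m, m)) = -lam (m, m) * m := by rw [← hexp, Real.log_exp]
  rw [hlam.genTime_eq hv, hexp, hlog]
  rw [hlog] at hderiv_pos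
  simp only [min_self]
  set l := lam (m, m)
  have hsub : 0 < 1 - l := sub_pos.mpr hl1
  have hfactor : l / (1 - l) + -l * m = l * (1 - m + l * m) / (1 - l) := by
    field_simp
    ring
  rw [hfactor, div_pos_iff_of_pos_right hsub] at hderiv_pos
  have hnum : 1 - m + l * m ≠ 0 := (pos_of_mul_pos_right hderiv_pos hl0.le).ne'
  rw [hfactor]
  field_simp

theorem sub_eq_sub_diag {m u ε t : ℝ} (hm : 1 < m) (hu : u ∈ Icc 0 1) (hε : ε ∈ Ioo 0 (m - 1))
    (ht : 0 ≤ t) : lam (m, m - ε * u + ε * t) - lam (m, m - ε * u)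
      = lam (m + ε * (min t u - u), m + ε * (min t u - u)) - lam (m + ε * -u, m + ε * -u) := by
  have hεu : ε * u ≤ ε := mul_le_of_le_one_right hε.1.le hu.2
  have hεu0 : 0 ≤ ε * u := mul_nonneg hε.1.le hu.1
  have hεt : 0 ≤ ε * t := mul_nonneg hε.1.le ht
  have hmin₁ : min m (m - ε * u + ε * t) = m + ε * (min t u - u) := by
    rcases le_total t u with htu | htu
    · rw [min_eq_left htu, min_eq_right (by nlinarith)]
      ring
    · rw [min_eq_right htu, min_eq_left (by nlinarith)]
      ring
  have hmin₂ : min m (m - ε * u) = m + ε * -u := by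
    rw [min_eq_right (by linarith)]
    ring
  rw [hlam.eq_diag (p := (m, _)) (lt_min hm (by linarith [hε.2])),
    hlam.eq_diag (p := (m, m - ε * u)) (lt_min hm (by linarith [hε.2])), hmin₁, hmin₂]

end IsMalthusian

theorem integrable_kker (σ : ℝ) : Integrable (kker σ) := by
  have hind : kker σ = fun h => (Icc (-1:ℝ) 1).indicator (fun h => Real.exp (-h ^ 2 / σ ^ 2)) h /
      ∫ z in (-1:ℝ)..1, Real.exp (-z ^ 2 / σ ^ 2) := by
    ext h
    simp only [kker, indicator_apply]
  rw [hind]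
  exact ((by fun_prop : Continuous fun h : ℝ => Real.exp (-h ^ 2 / σ ^ 2)).integrableOn_Icc
    |>.integrable_indicator measurableSet_Icc).div_const _

theorem drift_limit_on_diagonal_general (σ : ℝ)
    (lam : ℝ × ℝ → ℝ) (hlam : IsMalthusian lam)
    (x : ℝ × ℝ) (hx : x ∈ viable) (hdiag : x.1 = x.2)
    (u : ℝ) (hu : u ∈ Icc (0:ℝ) 1) :
    Tendsto
      (fun ε : ℝ => ∫ h in (0:ℝ)..1,
        ((lam (x.1, x.1 - ε * u + ε * h) - lam (x.1, x.1 - ε * u)) / ε) * (h * kker σ h))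
      (nhdsWithin 0 (Ioi 0))
      (nhds ((Real.exp (-(lam x) * x.1) / genTime lam x) *
        ((∫ h in (0:ℝ)..u, h ^ 2 * kker σ h) + u * ∫ h in u..1, h * kker σ h))) ∧
    ∀ᶠ ε in nhdsWithin (0:ℝ) (Ioi 0), ∀ h ∈ Icc u 1,
      lam (x.1, x.1 + ε * (h - u)) = lam x := by
  obtain ⟨m, rfl⟩ : ∃ m, x = (m, m) := ⟨x.1, Prod.ext rfl hdiag.symm⟩
  have hm : 1 < m := by simpa [viable] using hx
  dsimp only
  refine ⟨?_, ?_⟩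
  · have hg : IntervalIntegrable (fun t => t * kker σ t) volume 0 1 :=
      (integrable_kker σ).intervalIntegrable.continuousOn_mul continuousOn_id
    have hlim := (hlam.hasDerivAt_diag hm).tendsto_integral_sub_div_mul
      (eventually_of_mem (Ioi_mem_nhds hm) fun y hy => hlam.continuousAt_diag hy)
      (c₁ := fun t => min t u - u) (c₂ := fun _ => -u) (by fun_prop) continuousOn_const hg
    set D := Real.exp (-lam (m, m) * m) / genTime lam (m, m)
    have hvalue : ∫ t in (0:ℝ)..1, D * (min t u - u - -u) * (t * kker σ t)
        = D * ((∫ t in (0:ℝ)..u, t ^ 2 * kker σ t) + u * ∫ t in u..1, t * kker σ t) := by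
      simp only [sub_neg_eq_add, sub_add_cancel, mul_assoc, intervalIntegral.integral_const_mul,
        integral_min_mul hu.1 hu.2 hg, sq]
    rw [← hvalue]
    refine (hlim.mono_left (nhdsWithin_mono _ fun ε hε => ne_of_gt hε)).congr' ?_
    filter_upwards [Ioo_mem_nhdsGT (sub_pos.mpr hm)] with ε hε
    refine intervalIntegral.integral_congr fun t ht => ?_
    rw [uIcc_of_le zero_le_one] at ht
    rw [hlam.sub_eq_sub_diag hm hu hε ht.1]
  · filter_upwards [self_mem_nhdsWithin] with ε hε t ht
    have hgrowth : 0 ≤ ε * (t - u) := mul_nonneg (le_of_lt hε) (sub_nonneg.mpr ht.1)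
    rw [hlam.eq_diag (p := (m, _)) (lt_min hm (by linarith)), min_eq_left (by linarith)]

/-- Limit of the rescaled drift at a diagonal point `x_b = x_d = m` approached from below
at rate `u`:
`lim_{ε→0⁺} ∫₀¹ ((λ(x_b, m−εu+εh) − λ(x_b, m−εu))/ε) h k(h) dh
  = (e^{−λ(x)m}/G(x)) (∫₀^u h² k(h) dh + u ∫_u^1 h k(h) dh)`;
moreover for small `ε > 0` and `h ∈ [u,1]`, `λ(x_b, m + ε(h−u)) = λ(x)`. -/
theorem drift_limit_on_diagonal (σ : ℝ) (hσ : 0 < σ)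
    (lam : ℝ × ℝ → ℝ) (hlam : IsMalthusian lam)
    (x : ℝ × ℝ) (hx : x ∈ viable) (hdiag : x.1 = x.2)
    (u : ℝ) (hu : u ∈ Icc (0:ℝ) 1) :
    Tendsto
      (fun ε : ℝ => ∫ h in (0:ℝ)..1,
        ((lam (x.1, x.1 - ε * u + ε * h) - lam (x.1, x.1 - ε * u)) / ε) * (h * kker σ h))
      (nhdsWithin 0 (Ioi 0))
      (nhds ((Real.exp (-(lam x) * x.1) / genTime lam x) *
        ((∫ h in (0:ℝ)..u, h ^ 2 * kker σ h) + u * ∫ h in u..1, h * kker σ h))) ∧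
    ∀ᶠ ε in nhdsWithin (0:ℝ) (Ioi 0), ∀ h ∈ Icc u 1,
      lam (x.1, x.1 + ε * (h - u)) = lam x :=
  drift_limit_on_diagonal_general σ lam hlam x hx hdiag u hu
end
end
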